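/- There exists a constant C₁ > 0 such that for every integer n ≥ 1, every family 0 ≤ a₁ < b₁ < a₂ < b₂ < ⋯ < a_n < b_n ≤ 1 with A := ⋃_{i=1}^n (a_i, b_i), and every μ ∈ (0,1], there exists a Lipschitz function u : ℝ → ℝ with 0 ≤ u ≤ 1 such that (μ/2)∫₀¹ (u′(x))² dx − (1/2)∫₀¹ 𝟙_A(x)·u(x)² dx + (1/3)∫₀¹ u(x)³ dx + (1/6)·|A| ≤ C₁·√μ·n, where |A| = Σ_{i=1}^n (b_i − a_i) is the Lebesgue measure of A and u′ denotes the almost-everywhere defined derivative of the Lipschitz function u. -/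

import Mathlib

/-!
Take `u = min 1 (dist(·, Aᶜ) / η)` with `η = √μ`. Away from the boundary layer
`{x ∈ closure A | dist(x, Aᶜ) ≤ η}` the function `u` is locally `0` (outside `A`) or locally `1`
(inside `A`), and there the energy density vanishes, since `-½ + ⅓ + ⅙ = 0`. On the layer,
`μ/2 · u'² ≤ ½` because `u` is `η⁻¹`-Lipschitz, and the reaction part is at most `⅙`.
The layer consists of `2n` strips of width `η`, so the energy is at most `⅔ · 2nη = (4/3) √μ n`.
-/

open MeasureTheory Metric Set Topology Function

noncomputable def distProfile {α : Type*} [PseudoMetricSpace α] (s : Set α) (η : ℝ) (x : α) : ℝ :=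
  min 1 (η⁻¹ * infDist x sᶜ)

def boundaryLayer {α : Type*} [PseudoMetricSpace α] (s : Set α) (η : ℝ) : Set α :=
  closure s ∩ {x | infDist x sᶜ ≤ η}

/-- The integrand of the shifted energy `Ẽ_{m,μ}` for `m = 𝟙_s`, where `⅙ m³ = ⅙ 𝟙_s`. -/
noncomputable def energyDensity (μ : ℝ) (s : Set ℝ) (u : ℝ → ℝ) (x : ℝ) : ℝ :=
  μ / 2 * deriv u x ^ 2 - 1 / 2 * (s.indicator (fun _ => (1:ℝ)) x * u x ^ 2) + 1 / 3 * u x ^ 3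
    + 1 / 6 * s.indicator (fun _ => (1:ℝ)) x

section Profile

variable {α : Type*} [PseudoMetricSpace α] {s : Set α} {η : ℝ} {x : α}

lemma distProfile_nonneg (hη : 0 ≤ η) : 0 ≤ distProfile s η x :=
  le_min zero_le_one (mul_nonneg (inv_nonneg.2 hη) infDist_nonneg)

lemma distProfile_le_one : distProfile s η x ≤ 1 := min_le_left _ _

lemma lipschitzWith_distProfile (s : Set α) (η : ℝ) : LipschitzWith ‖η⁻¹‖₊ (distProfile s η) := by
  rw [← mul_one ‖η⁻¹‖₊]
  exact ((lipschitzWith_smul η⁻¹).comp (lipschitz_infDist_pt sᶜ)).const_min 1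

lemma distProfile_eq_zero (hx : x ∉ s) : distProfile s η x = 0 := by
  simp [distProfile, infDist_zero_of_mem (mem_compl hx)]

lemma distProfile_eq_one (hη : 0 < η) (hx : η ≤ infDist x sᶜ) : distProfile s η x = 1 :=
  min_eq_left ((one_le_inv_mul₀ hη).2 hx)

lemma isClosed_boundaryLayer (s : Set α) (η : ℝ) : IsClosed (boundaryLayer s η) :=
  isClosed_closure.inter (isClosed_le (continuous_infDist_pt sᶜ) continuous_const)

end Profile

lemma deriv_distProfile_eq_zero {s : Set ℝ} {η x : ℝ} (hη : 0 < η)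
    (hx : x ∉ boundaryLayer s η) : deriv (distProfile s η) x = 0 := by
  obtain ⟨c, hc⟩ : ∃ c, distProfile s η =ᶠ[𝓝 x] fun _ => c := by
    simp only [boundaryLayer, mem_inter_iff, mem_ofPred_eq, not_and_or, not_le] at hx
    rcases hx with hx | hx
    · exact ⟨0, Filter.eventuallyEq_of_mem (isClosed_closure.isOpen_compl.mem_nhds hx)
        fun y hy => distProfile_eq_zero fun hys => hy (subset_closure hys)⟩
    · exact ⟨1, ((continuous_infDist_pt _).continuousAt.eventually (lt_mem_nhds hx)).mono
        fun y hy => distProfile_eq_one hη hy.le⟩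
  rw [hc.deriv_eq, deriv_const]

lemma energyDensity_distProfile_le {s : Set ℝ} {η μ : ℝ} (hη : 0 < η) (hμ : μ ≤ η ^ 2) (x : ℝ) :
    energyDensity μ s (distProfile s η) x
      ≤ 2 / 3 * (boundaryLayer s η).indicator (fun _ => (1:ℝ)) x := by
  have hu1 : distProfile s η x ≤ 1 := distProfile_le_one
  by_cases hL : x ∈ boundaryLayer s η
  · have hdiff : μ * deriv (distProfile s η) x ^ 2 ≤ 1 := by
      have hd : |deriv (distProfile s η) x| ≤ η⁻¹ := by
        simpa [abs_of_pos hη] using norm_deriv_le_of_lipschitz (lipschitzWith_distProfile s η)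
      calc μ * deriv (distProfile s η) x ^ 2 ≤ η ^ 2 * η⁻¹ ^ 2 :=
            mul_le_mul hμ (sq_le_sq' (abs_le.1 hd).1 (abs_le.1 hd).2) (sq_nonneg _) (sq_nonneg _)
        _ = 1 := by field_simp
    rw [indicator_of_mem hL, energyDensity]
    by_cases hs : x ∈ s
    · rw [indicator_of_mem hs]
      nlinarith [mul_nonneg (sq_nonneg (distProfile s η x)) (sub_nonneg.2 hu1)]
    · rw [indicator_of_notMem hs, distProfile_eq_zero hs]
      linarith
  · rw [indicator_of_notMem hL, energyDensity, deriv_distProfile_eq_zero hη hL]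
    by_cases hs : x ∈ s
    · have hdist : η < infDist x sᶜ := by
        simpa [boundaryLayer, subset_closure hs] using hL
      rw [indicator_of_mem hs, distProfile_eq_one hη hdist.le]
      norm_num
    · rw [indicator_of_notMem hs, distProfile_eq_zero hs]
      norm_num

section Integrals

variable {μ a b : ℝ} {s : Set ℝ} {u : ℝ → ℝ} {K : NNReal}

lemma LipschitzWith.intervalIntegrable_deriv_sq (hu : LipschitzWith K u) :
    IntervalIntegrable (fun x => deriv u x ^ 2) volume a b := by
  refine (intervalIntegrable_const (c := (K : ℝ) ^ 2)).mono_fun'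
    ((measurable_deriv u).pow_const 2).aestronglyMeasurable (ae_of_all _ fun x => ?_)
  simp only [norm_pow, Real.norm_eq_abs]
  exact pow_le_pow_left₀ (abs_nonneg _) (norm_deriv_le_of_lipschitz hu) 2

lemma intervalIntegrable_indicator_one (hs : MeasurableSet s) :
    IntervalIntegrable (s.indicator fun _ => (1:ℝ)) volume a b :=
  (intervalIntegrable_const (c := (1:ℝ))).mono_fun'
    (measurable_const.indicator hs).aestronglyMeasurable
    (ae_of_all _ fun x => by by_cases hx : x ∈ s <;> simp [hx])

lemma intervalIntegral_indicator_one (hs : MeasurableSet s) (hab : a ≤ b) :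
    ∫ x in a..b, s.indicator (fun _ => (1:ℝ)) x = volume.real (s ∩ Ioc a b) := by
  rw [intervalIntegral.integral_of_le hab, ← Pi.one_def, integral_indicator_one hs,
    measureReal_restrict_apply hs]

lemma intervalIntegrable_energyDensity (hu : LipschitzWith K u) (hs : MeasurableSet s) :
    IntervalIntegrable (energyDensity μ s u) volume a b :=
  (((hu.intervalIntegrable_deriv_sq.const_mul _).sub
    (((intervalIntegrable_indicator_one hs).mul_continuousOn
      (hu.continuous.pow 2).continuousOn).const_mul _)).add
    (((hu.continuous.pow 3).intervalIntegrable a b).const_mul _)).add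
    ((intervalIntegrable_indicator_one hs).const_mul _)

lemma integral_energyDensity (hu : LipschitzWith K u) (hs : MeasurableSet s) :
    ∫ x in a..b, energyDensity μ s u x
      = μ / 2 * (∫ x in a..b, deriv u x ^ 2)
        - 1 / 2 * (∫ x in a..b, s.indicator (fun _ => (1:ℝ)) x * u x ^ 2)
        + 1 / 3 * (∫ x in a..b, u x ^ 3)
        + 1 / 6 * (∫ x in a..b, s.indicator (fun _ => (1:ℝ)) x) := by
  have h1 := (hu.intervalIntegrable_deriv_sq (a := a) (b := b)).const_mul (μ / 2)
  have h2 := ((intervalIntegrable_indicator_one hs (a := a) (b := b)).mul_continuousOn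
    (hu.continuous.pow 2).continuousOn).const_mul (1 / 2)
  have h3 := ((hu.continuous.pow 3).intervalIntegrable (μ := volume) a b).const_mul (1 / 3)
  have h4 := (intervalIntegrable_indicator_one hs (a := a) (b := b)).const_mul (1 / 6)
  simp only [energyDensity]
  simp only [Pi.pow_apply] at h2 h3
  rw [intervalIntegral.integral_add ((h1.sub h2).add h3) h4,
    intervalIntegral.integral_add (h1.sub h2) h3, intervalIntegral.integral_sub h1 h2]
  simp only [intervalIntegral.integral_const_mul]

end Integrals

lemma min_sub_le_infDist_compl {s : Set ℝ} {a b : ℝ} (hab : Ioo a b ⊆ s) (hs : sᶜ.Nonempty)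
    (x : ℝ) : min (x - a) (b - x) ≤ infDist x sᶜ := by
  by_contra! h
  obtain ⟨y, hy, hxy⟩ := (infDist_lt_iff hs).1 h
  rw [Real.dist_eq, abs_lt] at hxy
  have := min_le_left (x - a) (b - x)
  have := min_le_right (x - a) (b - x)
  exact hy (hab ⟨by linarith, by linarith⟩)

section Intervals

variable {ι : Type*} [Fintype ι] {a b : ι → ℝ}

lemma boundaryLayer_iUnion_Ioo_subset (hs : (⋃ i, Ioo (a i) (b i))ᶜ.Nonempty) (η : ℝ) :
    boundaryLayer (⋃ i, Ioo (a i) (b i)) η ⊆ ⋃ i, Icc (a i) (a i + η) ∪ Icc (b i - η) (b i) := by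
  rintro x ⟨hcl, hx⟩
  have hIcc : closure (⋃ i, Ioo (a i) (b i)) ⊆ ⋃ i, Icc (a i) (b i) :=
    closure_minimal (iUnion_mono fun _ => Ioo_subset_Icc_self)
      (isClosed_iUnion_of_finite fun _ => isClosed_Icc)
  obtain ⟨i, hai, hib⟩ := mem_iUnion.1 (hIcc hcl)
  have hmin := (min_sub_le_infDist_compl (subset_iUnion (fun i => Ioo (a i) (b i)) i) hs x).trans
    (hx : infDist x _ ≤ η)
  refine mem_iUnion.2 ⟨i, ?_⟩
  rcases min_le_iff.1 hmin with h | h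
  · exact Or.inl ⟨hai, by linarith⟩
  · exact Or.inr ⟨by linarith, hib⟩

lemma volume_real_boundaryLayer_iUnion_Ioo_le (hs : (⋃ i, Ioo (a i) (b i))ᶜ.Nonempty)
    {η : ℝ} (hη : 0 ≤ η) :
    volume.real (boundaryLayer (⋃ i, Ioo (a i) (b i)) η) ≤ 2 * Fintype.card ι * η := by
  have hbdd : Bornology.IsBounded (⋃ i, Icc (a i) (a i + η) ∪ Icc (b i - η) (b i)) :=
    Bornology.isBounded_iUnion.2 fun _ => (isBounded_Icc _ _).union (isBounded_Icc _ _)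
  calc volume.real (boundaryLayer (⋃ i, Ioo (a i) (b i)) η)
      ≤ volume.real (⋃ i, Icc (a i) (a i + η) ∪ Icc (b i - η) (b i)) :=
        measureReal_mono (boundaryLayer_iUnion_Ioo_subset hs η) hbdd.measure_lt_top.ne
    _ ≤ ∑ i, volume.real (Icc (a i) (a i + η) ∪ Icc (b i - η) (b i)) :=
        measureReal_iUnion_fintype_le _
    _ ≤ ∑ _i : ι, 2 * η := by
        refine Finset.sum_le_sum fun i _ => (measureReal_union_le _ _).trans ?_
        rw [Real.volume_real_Icc_of_le (by linarith), Real.volume_real_Icc_of_le (by linarith)]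
        linarith
    _ = 2 * Fintype.card ι * η := by simp [mul_comm, mul_left_comm]

lemma volume_real_iUnion_Ioo [LinearOrder ι] (hab : ∀ i, a i ≤ b i)
    (hord : ∀ i j, i < j → b i ≤ a j) :
    volume.real (⋃ i, Ioo (a i) (b i)) = ∑ i, (b i - a i) := by
  have hdisj : Pairwise (Disjoint on fun i => Ioo (a i) (b i)) := by
    intro i j hij
    rcases hij.lt_or_gt with h | h
    · exact disjoint_left.2 fun x hi hj => by linarith [hi.2, hj.1, hord i j h]
    · exact disjoint_left.2 fun x hi hj => by linarith [hi.1, hj.2, hord j i h]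
  rw [measureReal_iUnion_fintype hdisj (fun _ => measurableSet_Ioo)
    fun _ => measure_Ioo_lt_top.ne]
  exact Finset.sum_congr rfl fun i _ => Real.volume_real_Ioo_of_le (hab i)

end Intervals

/-- Quantitative content of Proposition 1 (Pr:1D): for `A` a finite union of
`n` disjoint open intervals in `[0,1]` and `μ ∈ (0,1]`, the shifted energy
`Ẽ_{𝟙_A,μ}` admits a `[0,1]`-valued Lipschitz competitor `u` with
`Ẽ_{𝟙_A,μ}(u) ≤ C₁ √μ n`. -/
theorem energy_competitor_bound_1D :
    ∃ C₁ > (0:ℝ),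
      ∀ (n : ℕ), 1 ≤ n →
      ∀ (a b : Fin n → ℝ),
        (∀ i, 0 ≤ a i) → (∀ i, a i < b i) → (∀ i, b i ≤ 1) →
        (∀ i j, i < j → b i < a j) →
        ∀ (μ : ℝ), 0 < μ → μ ≤ 1 →
          ∃ u : ℝ → ℝ, (∃ L : NNReal, LipschitzWith L u) ∧
            (∀ x, 0 ≤ u x ∧ u x ≤ 1) ∧
            μ / 2 * (∫ x in (0:ℝ)..1, (deriv u x) ^ 2)
              - (1/2) * (∫ x in (0:ℝ)..1,
                  (⋃ i, Set.Ioo (a i) (b i)).indicator (fun _ => (1:ℝ)) x * u x ^ 2)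
              + (1/3) * (∫ x in (0:ℝ)..1, u x ^ 3)
              + (1/6) * (∑ i, (b i - a i))
            ≤ C₁ * Real.sqrt μ * n := by
  refine ⟨4 / 3, by norm_num, fun n _ a b ha0 hab hb1 hord μ hμ0 _ => ?_⟩
  set A := ⋃ i, Ioo (a i) (b i)
  have hη : 0 < √μ := Real.sqrt_pos.2 hμ0
  have hAmeas : MeasurableSet A := MeasurableSet.iUnion fun _ => measurableSet_Ioo
  have hA01 : A ⊆ Ioc 0 1 :=
    iUnion_subset fun i x hx => ⟨(ha0 i).trans_lt hx.1, hx.2.le.trans (hb1 i)⟩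
  have hAc : Aᶜ.Nonempty := ⟨0, fun h => (hA01 h).1.false⟩
  have hlip := lipschitzWith_distProfile A √μ
  set L := boundaryLayer A √μ
  have hLfin : volume L ≠ ⊤ :=
    (((isBounded_Ioc 0 1).subset hA01).closure.subset inter_subset_left).measure_lt_top.ne
  have hLmeas : MeasurableSet L := (isClosed_boundaryLayer A √μ).measurableSet
  have hvolA : ∑ i, (b i - a i) = ∫ x in (0:ℝ)..1, A.indicator (fun _ => (1:ℝ)) x := by
    rw [intervalIntegral_indicator_one hAmeas zero_le_one, inter_eq_left.2 hA01,
      volume_real_iUnion_Ioo (fun i => (hab i).le) fun i j h => (hord i j h).le]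
  refine ⟨distProfile A √μ, ⟨_, hlip⟩,
    fun x => ⟨distProfile_nonneg hη.le, distProfile_le_one⟩, ?_⟩
  rw [hvolA, ← integral_energyDensity hlip hAmeas]
  calc ∫ x in (0:ℝ)..1, energyDensity μ A (distProfile A √μ) x
      ≤ ∫ x in (0:ℝ)..1, 2 / 3 * L.indicator (fun _ => (1:ℝ)) x :=
        intervalIntegral.integral_mono_on zero_le_one
          (intervalIntegrable_energyDensity hlip hAmeas)
          ((intervalIntegrable_indicator_one hLmeas).const_mul _)
          fun x _ => energyDensity_distProfile_le hη (Real.sq_sqrt hμ0.le).ge x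
    _ = 2 / 3 * volume.real (L ∩ Ioc 0 1) := by
        rw [intervalIntegral.integral_const_mul, intervalIntegral_indicator_one hLmeas zero_le_one]
    _ ≤ 2 / 3 * (2 * n * √μ) := by
        gcongr
        exact (measureReal_mono inter_subset_left hLfin).trans
          (by simpa using volume_real_boundaryLayer_iUnion_Ioo_le hAc hη.le)
    _ = 4 / 3 * √μ * n := by ring
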